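/- Let T be a Grothendieck site whose topos of sheaves Shv(T) is replete. Let h : (F_i)_{i∈ℕ} → (G_i)_{i∈ℕ} be a morphism of ℕ-indexed inverse systems of multiplicative presheaves on T such that each induced map F_i^♯ → G_i^♯ on sheafifications is an isomorphism. Then the natural map (lim_i F_i)^♯ → (lim_i G_i)^♯ is an epimorphism of sheaves. -/

import Mathlib

open CategoryTheory Limits Opposite

universe u

variable {C : Type u} [SmallCategory C]

/-- A presheaf `P` on a Grothendieck site is *multiplicative* if for every set-indexed
family `{X_j}` of objects, the natural map
`Hom((∐_j h_{X_j})^♯, P) → Hom(∐_j h_{X_j}, P) ≅ ∏_j P(X_j)` is a bijection. -/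
def IsMultiplicative (J : GrothendieckTopology C) (P : Cᵒᵖ ⥤ Type u) : Prop :=
  ∀ (ι : Type u) (X : ι → C),
    Function.Bijective
      (fun (g : sheafify J (∐ fun j => yoneda.obj (X j)) ⟶ P) (j : ι) =>
        yonedaEquiv
          (Sigma.ι (fun j => yoneda.obj (X j)) j ≫
            toSheafify J (∐ fun j => yoneda.obj (X j)) ≫ g))

/-- A category (e.g. a 1-topos) is *replete* if for every `ℕ`-indexed inverse system
in which all transition maps are epimorphisms, the projections from the inverse limit
are epimorphisms. -/
def IsReplete (D : Type*) [CategoryTheory.Category D]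
    [HasLimitsOfShape ℕᵒᵖ D] : Prop :=
  ∀ F : ℕᵒᵖ ⥤ D,
    (∀ n : ℕ, Epi (F.map (homOfLE (Nat.le_succ n)).op)) →
    ∀ n : ℕ, Epi (limit.π F (op n))

/-! Since `η_n^♯` is an isomorphism, every `η_n` is locally surjective and locally injective,
and it suffices to show that `lim η` is locally surjective. Given a section `s` of `lim G` over
`X`, one chooses inductively families of arrows `Y_i ⟶ X`, each refining the previous one and the
first one covering `X`, together with lifts of `s_n|Y_i` to `F_n` that are compatible along
`F_{n+1} ⟶ F_n`; local surjectivity of `η_{n+1}` and local injectivity of `η_n` make each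
refinement covering. The coproducts of representables of these families form an inverse system
whose sheafified transition maps are epimorphisms, so by repleteness its limit still covers `X`.
Multiplicativity turns the lifts into maps out of the sheafified coproducts; they assemble into a
map from that limit to `lim F` over `s`. -/

section

variable {J : GrothendieckTopology C}

namespace CategoryTheory.Presheaf

lemma epi_presheafToSheaf_map {P Q : Cᵒᵖ ⥤ Type u} (f : P ⟶ Q) [IsLocallySurjective J f] :
    Epi ((presheafToSheaf J (Type u)).map f) :=
  (Sheaf.isLocallySurjective_iff_epi _).1 <|
    (isLocallySurjective_presheafToSheaf_map_iff J f).2 inferInstance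

lemma imageSieve_le_imageSieve_of_comm {A B P Q : Cᵒᵖ ⥤ Type u} {w : A ⟶ P} {e : A ⟶ B}
    {g : P ⟶ Q} {χ : B ⟶ Q} (sq : w ≫ g = e ≫ χ) {U : C} (b : B.obj (op U)) :
    imageSieve e b ≤ imageSieve g (χ.app _ b) := by
  rintro V f ⟨a, ha⟩
  refine ⟨w.app _ a, ?_⟩
  rw [← NatTrans.comp_app_apply, sq, NatTrans.comp_app_apply, ha, NatTrans.naturality_apply]

end CategoryTheory.Presheaf

section SigmaYoneda

variable {ι κ : Type u}

lemma exists_sigma_ι_app_eq (A : ι → C) {U : C}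
    (x : (∐ fun i => yoneda.obj (A i)).obj (op U)) :
    ∃ (i : ι) (h : U ⟶ A i), (Sigma.ι (fun i => yoneda.obj (A i)) i).app (op U) h = x := by
  obtain ⟨⟨i⟩, h, hx⟩ := Types.jointly_surjective_of_isColimit
    (isColimitOfPreserves ((evaluation Cᵒᵖ (Type u)).obj (op U)) (colimit.isColimit _)) x
  exact ⟨i, h, hx⟩

noncomputable def sigmaYonedaMap {A : ι → C} {B : κ → C} (σ : ι → κ)
    (f : ∀ i, A i ⟶ B (σ i)) :
    (∐ fun i => yoneda.obj (A i)) ⟶ ∐ fun k => yoneda.obj (B k) :=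
  Sigma.desc fun i => yoneda.map (f i) ≫ Sigma.ι (fun k => yoneda.obj (B k)) (σ i)

lemma ι_sigmaYonedaMap {A : ι → C} {B : κ → C} (σ : ι → κ) (f : ∀ i, A i ⟶ B (σ i)) (i : ι) :
    Sigma.ι (fun i => yoneda.obj (A i)) i ≫ sigmaYonedaMap σ f
      = yoneda.map (f i) ≫ Sigma.ι (fun k => yoneda.obj (B k)) (σ i) :=
  Sigma.ι_desc _ _

lemma sigmaYonedaMap_app_ι {A : ι → C} {B : κ → C} (σ : ι → κ) (f : ∀ i, A i ⟶ B (σ i))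
    (i : ι) {U : C} (h : U ⟶ A i) :
    (sigmaYonedaMap σ f).app (op U) ((Sigma.ι (fun i => yoneda.obj (A i)) i).app (op U) h)
      = (Sigma.ι (fun k => yoneda.obj (B k)) (σ i)).app (op U) (h ≫ f i) :=
  ConcreteCategory.congr_hom (congr_app (ι_sigmaYonedaMap σ f i) (op U)) h

lemma sigmaYonedaMap_comp {ν : Type u} {A : ι → C} {B : κ → C} {D : ν → C}
    (σ : ι → κ) (f : ∀ i, A i ⟶ B (σ i)) (τ : κ → ν) (g : ∀ k, B k ⟶ D (τ k)) :
    sigmaYonedaMap σ f ≫ sigmaYonedaMap τ g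
      = sigmaYonedaMap (τ ∘ σ) (fun i => f i ≫ g (σ i)) := by
  ext1 i
  simp [sigmaYonedaMap]

lemma isLocallySurjective_of_imageSieve_sigmaι_mem {B : κ → C} {Q : Cᵒᵖ ⥤ Type u}
    (g : Q ⟶ ∐ fun k => yoneda.obj (B k))
    (hg : ∀ k, Presheaf.imageSieve g
      ((Sigma.ι (fun k => yoneda.obj (B k)) k).app (op (B k)) (𝟙 (B k))) ∈ J (B k)) :
    Presheaf.IsLocallySurjective J g where
  imageSieve_mem {U} x := by
    obtain ⟨k, h, rfl⟩ := exists_sigma_ι_app_eq B x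
    have hx : (Sigma.ι (fun k => yoneda.obj (B k)) k).app (op U) h
        = (∐ fun k => yoneda.obj (B k)).map h.op
          ((Sigma.ι (fun k => yoneda.obj (B k)) k).app (op (B k)) (𝟙 (B k))) := by
      rw [← NatTrans.naturality_apply]
      simp
    rw [hx, ← Presheaf.pullback_imageSieve]
    exact J.pullback_stable h (hg k)

end SigmaYoneda

namespace IsMultiplicative

variable {P Q : Cᵒᵖ ⥤ Type u} {ι κ : Type u}

noncomputable def desc (hP : IsMultiplicative J P) (A : ι → C) (a : ∀ i, P.obj (op (A i))) :
    sheafify J (∐ fun i => yoneda.obj (A i)) ⟶ P :=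
  ((hP ι A).2 a).choose

lemma yonedaEquiv_desc (hP : IsMultiplicative J P) (A : ι → C) (a : ∀ i, P.obj (op (A i)))
    (i : ι) :
    yonedaEquiv (Sigma.ι (fun i => yoneda.obj (A i)) i ≫
      toSheafify J (∐ fun i => yoneda.obj (A i)) ≫ hP.desc A a) = a i :=
  congr_fun ((hP ι A).2 a).choose_spec i

lemma yonedaEquiv_desc_comp (hP : IsMultiplicative J P) (A : ι → C)
    (a : ∀ i, P.obj (op (A i))) (φ : P ⟶ Q) (i : ι) :
    yonedaEquiv (Sigma.ι (fun i => yoneda.obj (A i)) i ≫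
      toSheafify J (∐ fun i => yoneda.obj (A i)) ≫ hP.desc A a ≫ φ) = φ.app _ (a i) := by
  rw [← hP.yonedaEquiv_desc A a i, ← yonedaEquiv_comp]
  simp only [Category.assoc]

lemma hom_ext (hP : IsMultiplicative J P) {A : ι → C}
    {g g' : sheafify J (∐ fun i => yoneda.obj (A i)) ⟶ P}
    (h : ∀ i, yonedaEquiv (Sigma.ι (fun i => yoneda.obj (A i)) i ≫
        toSheafify J (∐ fun i => yoneda.obj (A i)) ≫ g)
      = yonedaEquiv (Sigma.ι (fun i => yoneda.obj (A i)) i ≫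
        toSheafify J (∐ fun i => yoneda.obj (A i)) ≫ g')) : g = g' :=
  (hP ι A).1 (funext h)

lemma comp_eq_sheafifyMap_comp (hQ : IsMultiplicative J Q) {A : ι → C} {B : κ → C}
    {g₁ : sheafify J (∐ fun i => yoneda.obj (A i)) ⟶ P} (φ : P ⟶ Q)
    {g₂ : sheafify J (∐ fun k => yoneda.obj (B k)) ⟶ Q} (σ : ι → κ) (f : ∀ i, A i ⟶ B (σ i))
    (h : ∀ i, φ.app _ (yonedaEquiv (Sigma.ι (fun i => yoneda.obj (A i)) i ≫
        toSheafify J (∐ fun i => yoneda.obj (A i)) ≫ g₁))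
      = Q.map (f i).op (yonedaEquiv (Sigma.ι (fun k => yoneda.obj (B k)) (σ i) ≫
        toSheafify J (∐ fun k => yoneda.obj (B k)) ≫ g₂))) :
    g₁ ≫ φ = sheafifyMap J (sigmaYonedaMap σ f) ≫ g₂ := by
  refine hQ.hom_ext fun i => ?_
  have hi := h i
  rw [yonedaEquiv_naturality, ← yonedaEquiv_comp] at hi
  simpa only [Category.assoc, ← toSheafify_naturality_assoc, sigmaYonedaMap, Sigma.ι_desc_assoc]
    using hi

end IsMultiplicative

theorem isMultiplicative_limit {K : Type*} [Category K] (G : K ⥤ Cᵒᵖ ⥤ Type u) [HasLimit G]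
    (hG : ∀ k, IsMultiplicative J (G.obj k)) : IsMultiplicative J (limit G) := by
  intro ι A
  constructor
  · intro g g' h
    refine limit.hom_ext fun k => (hG k).hom_ext fun i => ?_
    have hi := congr_arg ((limit.π G k).app _) (congr_fun h i)
    dsimp only at hi
    simpa only [← yonedaEquiv_comp, Category.assoc] using hi
  · intro v
    let c : Cone G :=
      { pt := sheafify J (∐ fun i => yoneda.obj (A i))
        π :=
          { app := fun k => (hG k).desc A fun i => (limit.π G k).app _ (v i)
            naturality := fun k k' f => (Category.id_comp _).trans <| (hG k').hom_ext fun i => by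
              rw [IsMultiplicative.yonedaEquiv_desc, IsMultiplicative.yonedaEquiv_desc_comp,
                ← NatTrans.comp_app_apply, limit.w] } }
    refine ⟨limit.lift G c, funext fun i => ?_⟩
    dsimp only
    refine yonedaEquiv.eq_symm_apply.1 (limit.hom_ext fun k => yonedaEquiv.injective ?_)
    rw [Category.assoc, Category.assoc, limit.lift_π, yonedaEquiv_symm_naturality_right,
      Equiv.apply_symm_apply]
    exact (hG k).yonedaEquiv_desc A _ i

structure LiftFamily {P Q : Cᵒᵖ ⥤ Type u} (η : P ⟶ Q) {X : C} (s : Q.obj (op X)) :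
    Type (u + 1) where
  ι : Type u
  obj : ι → C
  hom : ∀ i, obj i ⟶ X
  lift : ∀ i, P.obj (op (obj i))
  app_lift : ∀ i, η.app _ (lift i) = Q.map (hom i).op s

namespace LiftFamily

variable {P Q P' Q' : Cᵒᵖ ⥤ Type u} {η : P ⟶ Q} {X : C} {s : Q.obj (op X)}

/-- The representable `h_X` enters as a one-term coproduct so that multiplicativity applies. -/
noncomputable def toUnit (L : LiftFamily η s) :
    (∐ fun i => yoneda.obj (L.obj i)) ⟶ ∐ fun _ : PUnit.{u + 1} => yoneda.obj X :=
  sigmaYonedaMap (fun _ => PUnit.unit) L.hom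

lemma isLocallySurjective_toUnit (L : LiftFamily η s) (hL : Sieve.ofArrows L.obj L.hom ∈ J X) :
    Presheaf.IsLocallySurjective J L.toUnit := by
  refine isLocallySurjective_of_imageSieve_sigmaι_mem _ fun _ => J.superset_covering ?_ hL
  rintro Y f ⟨Z, g, _, ⟨i⟩, rfl⟩
  refine ⟨(Sigma.ι (fun i => yoneda.obj (L.obj i)) i).app (op _) g, ?_⟩
  rw [toUnit, sigmaYonedaMap_app_ι, ← NatTrans.naturality_apply]
  simp

variable (η s) in
noncomputable def ofImageSieve : LiftFamily η s where
  ι := Σ Y : C, { f : Y ⟶ X // Presheaf.imageSieve η s f }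
  obj k := k.1
  hom k := k.2.1
  lift k := k.2.2.choose
  app_lift k := k.2.2.choose_spec

lemma ofArrows_ofImageSieve_mem [Presheaf.IsLocallySurjective J η] :
    Sieve.ofArrows (ofImageSieve η s).obj (ofImageSieve η s).hom ∈ J X := by
  refine J.superset_covering ?_ (Presheaf.imageSieve_mem J η (U := op X) s)
  intro Y f hf
  exact ⟨Y, 𝟙 Y, f, ⟨(⟨Y, f, hf⟩ : (ofImageSieve η s).ι)⟩, Category.id_comp f⟩

variable (η' : P' ⟶ Q') (p : P' ⟶ P) (s' : Q'.obj (op X))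

def refinementSieve (L : LiftFamily η s) (i : L.ι) : Sieve (L.obj i) where
  arrows Z g := ∃ t : P'.obj (op Z),
    η'.app _ t = Q'.map (g ≫ L.hom i).op s' ∧ p.app _ t = P.map g.op (L.lift i)
  downward_closed := by
    rintro Z W g ⟨t, h₁, h₂⟩ e
    refine ⟨P'.map e.op t, ?_, ?_⟩
    · rw [NatTrans.naturality_apply, h₁, ← Functor.map_comp_apply, ← op_comp,
        Category.assoc]
    · rw [NatTrans.naturality_apply, h₂, ← Functor.map_comp_apply, ← op_comp]

lemma refinementSieve_mem {q : Q' ⟶ Q} (comm : η' ≫ q = p ≫ η) (hs : q.app _ s' = s)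
    [Presheaf.IsLocallySurjective J η'] [Presheaf.IsLocallyInjective J η]
    (L : LiftFamily η s) (i : L.ι) :
    L.refinementSieve η' p s' i ∈ J (L.obj i) := by
  refine J.transitive (Presheaf.imageSieve_mem J η' (U := op (L.obj i))
    (Q'.map (L.hom i).op s')) _ fun Y g ⟨t, ht⟩ => ?_
  have hη : η.app _ (p.app _ t) = η.app _ (P.map g.op (L.lift i)) := by
    rw [← NatTrans.comp_app_apply, ← comm, NatTrans.comp_app_apply, ht,
      NatTrans.naturality_apply, NatTrans.naturality_apply, hs, NatTrans.naturality_apply,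
      L.app_lift]
  refine J.superset_covering (fun W e he => ⟨P'.map e.op t, ?_, ?_⟩)
    (Presheaf.equalizerSieve_mem J η _ _ hη)
  · rw [NatTrans.naturality_apply, ht, ← Functor.map_comp_apply, ← Functor.map_comp_apply]
    simp
  · rw [NatTrans.naturality_apply]
    exact he.trans (Functor.map_comp_apply _ _ _ _).symm

noncomputable abbrev refinement (L : LiftFamily η s) : LiftFamily η' s' where
  ι := Σ (i : L.ι) (Z : C), { g : Z ⟶ L.obj i // L.refinementSieve η' p s' i g }
  obj k := k.2.1
  hom k := k.2.2.1 ≫ L.hom k.1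
  lift k := k.2.2.2.choose
  app_lift k := k.2.2.2.choose_spec.1

lemma app_refinement_lift (L : LiftFamily η s) (k : (L.refinement η' p s').ι) :
    p.app _ ((L.refinement η' p s').lift k) = P.map k.2.2.1.op (L.lift k.1) :=
  k.2.2.2.choose_spec.2

noncomputable def refinementHom (L : LiftFamily η s) :
    (∐ fun k => yoneda.obj ((L.refinement η' p s').obj k)) ⟶ ∐ fun i => yoneda.obj (L.obj i) :=
  sigmaYonedaMap Sigma.fst fun k => k.2.2.1

lemma refinementHom_toUnit (L : LiftFamily η s) :
    L.refinementHom η' p s' ≫ L.toUnit = (L.refinement η' p s').toUnit :=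
  sigmaYonedaMap_comp _ _ _ _

lemma isLocallySurjective_refinementHom (L : LiftFamily η s)
    (hL : ∀ i, L.refinementSieve η' p s' i ∈ J (L.obj i)) :
    Presheaf.IsLocallySurjective J (L.refinementHom η' p s') := by
  refine isLocallySurjective_of_imageSieve_sigmaι_mem _ fun i => J.superset_covering ?_ (hL i)
  intro Z g hg
  refine ⟨(Sigma.ι (fun k => yoneda.obj ((L.refinement η' p s').obj k)) ⟨i, Z, g, hg⟩).app
    (op Z) (𝟙 Z), ?_⟩
  rw [refinementHom, sigmaYonedaMap_app_ι, Category.id_comp, ← NatTrans.naturality_apply]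
  simp

lemma desc_comp_eq_sheafifyMap_toUnit_comp (hP : IsMultiplicative J P)
    (hQ : IsMultiplicative J Q) (L : LiftFamily η s)
    {χ : sheafify J (∐ fun _ : PUnit.{u + 1} => yoneda.obj X) ⟶ Q}
    (hχ : yonedaEquiv (Sigma.ι (fun _ : PUnit.{u + 1} => yoneda.obj X) PUnit.unit ≫
      toSheafify J (∐ fun _ : PUnit.{u + 1} => yoneda.obj X) ≫ χ) = s) :
    hP.desc L.obj L.lift ≫ η = sheafifyMap J L.toUnit ≫ χ :=
  hQ.comp_eq_sheafifyMap_comp η _ _ fun i => by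
    rw [hP.yonedaEquiv_desc, hχ, L.app_lift]

lemma desc_refinement_comp (hP' : IsMultiplicative J P') (hP : IsMultiplicative J P)
    (L : LiftFamily η s) :
    hP'.desc _ (L.refinement η' p s').lift ≫ p
      = sheafifyMap J (L.refinementHom η' p s') ≫ hP.desc L.obj L.lift :=
  hP.comp_eq_sheafifyMap_comp p _ _ fun k => by
    rw [hP'.yonedaEquiv_desc, hP.yonedaEquiv_desc, app_refinement_lift]

end LiftFamily

section Tower

variable {F G : ℕᵒᵖ ⥤ Cᵒᵖ ⥤ Type u} (η : F ⟶ G) {X : C} (s : (limit G).obj (op X))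

noncomputable def tower : ∀ n : ℕ, LiftFamily (η.app (op n)) ((limit.π G (op n)).app (op X) s)
  | 0 => LiftFamily.ofImageSieve _ _
  | n + 1 => (tower n).refinement (η.app (op (n + 1))) (F.map (homOfLE (Nat.le_succ n)).op) _

noncomputable def towerDiagram : ℕᵒᵖ ⥤ Cᵒᵖ ⥤ Type u :=
  Functor.ofOpSequence (X := fun n => ∐ fun i => yoneda.obj ((tower η s n).obj i)) fun n =>
    (tower η s n).refinementHom (η.app (op (n + 1))) (F.map (homOfLE (Nat.le_succ n)).op) _

lemma towerDiagram_map_succ (n : ℕ) :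
    (towerDiagram η s).map (homOfLE (Nat.le_succ n)).op
      = (tower η s n).refinementHom (η.app (op (n + 1))) (F.map (homOfLE (Nat.le_succ n)).op)
          ((limit.π G (op (n + 1))).app (op X) s) :=
  Functor.ofOpSequence_map_homOfLE_succ _ n

lemma isLocallySurjective_towerDiagram_map
    (hsurj : ∀ n, Presheaf.IsLocallySurjective J (η.app (op n)))
    (hinj : ∀ n, Presheaf.IsLocallyInjective J (η.app (op n))) (n : ℕ) :
    Presheaf.IsLocallySurjective J ((towerDiagram η s).map (homOfLE (Nat.le_succ n)).op) := by
  have := hsurj (n + 1)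
  have := hinj n
  rw [towerDiagram_map_succ]
  refine (tower η s n).isLocallySurjective_refinementHom _ _ _ fun i =>
    (tower η s n).refinementSieve_mem _ _ _ (η.naturality _).symm ?_ i
  rw [← NatTrans.comp_app_apply, limit.w]

variable (J) in
noncomputable abbrev towerSheaf : ℕᵒᵖ ⥤ Sheaf J (Type u) :=
  towerDiagram η s ⋙ presheafToSheaf J (Type u)

variable (J) in
noncomputable def towerToUnit (n : ℕ) :
    ((towerSheaf J η s).obj (op n)).obj ⟶ sheafify J (∐ fun _ : PUnit.{u + 1} => yoneda.obj X) :=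
  sheafifyMap J (tower η s n).toUnit

lemma towerSheaf_map_succ_comp_towerToUnit (n : ℕ) :
    ((towerSheaf J η s).map (homOfLE (Nat.le_succ n)).op).hom ≫ towerToUnit J η s n
      = towerToUnit J η s (n + 1) := by
  rw [Functor.comp_map, towerDiagram_map_succ]
  exact (sheafifyMap_comp J _ _).symm.trans
    (congrArg (sheafifyMap J) (LiftFamily.refinementHom_toUnit _ _ _ _))

lemma limit_π_comp_towerToUnit (n : ℕ) :
    (limit.π (towerSheaf J η s) (op n)).hom ≫ towerToUnit J η s n
      = (limit.π (towerSheaf J η s) (op 0)).hom ≫ towerToUnit J η s 0 := by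
  induction n with
  | zero => rfl
  | succ n ih =>
    rw [← ih, ← limit.w (towerSheaf J η s) (homOfLE (Nat.le_succ n)).op,
      ObjectProperty.FullSubcategory.comp_hom, Category.assoc,
      towerSheaf_map_succ_comp_towerToUnit]

noncomputable def towerLift (hF : ∀ n, IsMultiplicative J (F.obj (op n))) (n : ℕ) :
    ((towerSheaf J η s).obj (op n)).obj ⟶ F.obj (op n) :=
  (hF n).desc _ (tower η s n).lift

lemma towerLift_comp_map (hF : ∀ n, IsMultiplicative J (F.obj (op n))) (n : ℕ) :
    towerLift η s hF (n + 1) ≫ F.map (homOfLE (Nat.le_succ n)).op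
      = ((towerSheaf J η s).map (homOfLE (Nat.le_succ n)).op).hom ≫ towerLift η s hF n := by
  rw [Functor.comp_map, towerDiagram_map_succ]
  exact (tower η s n).desc_refinement_comp _ _ _ (hF (n + 1)) (hF n)

lemma towerLift_comp_app (hF : ∀ n, IsMultiplicative J (F.obj (op n)))
    (hG : ∀ n, IsMultiplicative J (G.obj (op n))) (n : ℕ) :
    towerLift η s hF n ≫ η.app (op n)
      = towerToUnit J η s n ≫
          (isMultiplicative_limit G fun n => hG n.unop).desc (fun _ : PUnit.{u + 1} => X)
            (fun _ => s) ≫ limit.π G (op n) :=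
  (tower η s n).desc_comp_eq_sheafifyMap_toUnit_comp (hF n) (hG n)
    (IsMultiplicative.yonedaEquiv_desc_comp _ _ _ _ _)

noncomputable def towerCone (hF : ∀ n, IsMultiplicative J (F.obj (op n))) : Cone F where
  pt := (limit (towerSheaf J η s)).obj
  π := NatTrans.ofOpSequence
    (fun n => (limit.π (towerSheaf J η s) (op n)).hom ≫ towerLift η s hF n)
    fun n => (Category.id_comp _).trans <| by
      rw [Category.assoc, towerLift_comp_map,
        ← Category.assoc, ← ObjectProperty.FullSubcategory.comp_hom, limit.w]

lemma lift_towerCone_comp_limMap (hF : ∀ n, IsMultiplicative J (F.obj (op n)))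
    (hG : ∀ n, IsMultiplicative J (G.obj (op n))) :
    limit.lift F (towerCone η s hF) ≫ limMap η
      = ((limit.π (towerSheaf J η s) (op 0)).hom ≫ towerToUnit J η s 0) ≫
          (isMultiplicative_limit G fun n => hG n.unop).desc (fun _ : PUnit.{u + 1} => X)
            fun _ => s := by
  refine limit.hom_ext fun ⟨n⟩ => ?_
  rw [Category.assoc, limMap_π, limit.lift_π_assoc]
  change ((limit.π (towerSheaf J η s) (op n)).hom ≫ towerLift η s hF n) ≫ η.app (op n) = _
  rw [Category.assoc, towerLift_comp_app η s hF hG, ← Category.assoc,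
    limit_π_comp_towerToUnit]
  exact (Category.assoc _ _ _).symm

end Tower

theorem isLocallySurjective_limMap_of_isReplete (hrep : IsReplete (Sheaf J (Type u)))
    {F G : ℕᵒᵖ ⥤ Cᵒᵖ ⥤ Type u} (η : F ⟶ G)
    (hF : ∀ n, IsMultiplicative J (F.obj (op n))) (hG : ∀ n, IsMultiplicative J (G.obj (op n)))
    (hsurj : ∀ n, Presheaf.IsLocallySurjective J (η.app (op n)))
    (hinj : ∀ n, Presheaf.IsLocallyInjective J (η.app (op n))) :
    Presheaf.IsLocallySurjective J (limMap η) where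
  imageSieve_mem {X} s := by
    have := hsurj 0
    have := (tower η s 0).isLocallySurjective_toUnit
      (LiftFamily.ofArrows_ofImageSieve_mem (J := J))
    have h0 := Presheaf.epi_presheafToSheaf_map (J := J) (tower η s 0).toUnit
    have hK := hrep (towerSheaf J η s) (fun n =>
      have := isLocallySurjective_towerDiagram_map η s hsurj hinj n
      Presheaf.epi_presheafToSheaf_map _) 0
    let e := limit.π (towerSheaf J η s) (op 0) ≫
      (presheafToSheaf J (Type u)).map (tower η s 0).toUnit
    have he : Sheaf.IsLocallySurjective e := (Sheaf.isLocallySurjective_iff_epi e).2 <|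
      epi_comp' hK h0
    let u := (toSheafify J (∐ fun _ : PUnit.{u + 1} => yoneda.obj X)).app (op X)
      ((Sigma.ι (fun _ : PUnit.{u + 1} => yoneda.obj X) PUnit.unit).app (op X) (𝟙 X))
    have hu : ((isMultiplicative_limit G fun n => hG n.unop).desc (fun _ : PUnit.{u + 1} => X)
        fun _ => s).app _ u = s :=
      IsMultiplicative.yonedaEquiv_desc _ _ _ PUnit.unit
    have hle :=
      Presheaf.imageSieve_le_imageSieve_of_comm (lift_towerCone_comp_limMap η s hF hG) u
    rw [hu] at hle
    exact J.superset_covering hle (Presheaf.imageSieve_mem J e.hom u)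

end

/-- If `Shv(T)` is replete and `η : (F_i) ⟶ (G_i)` is a map of `ℕ`-indexed inverse
systems of multiplicative presheaves inducing isomorphisms on sheafifications, then
the induced map `(lim F_i)^♯ → (lim G_i)^♯` is an epimorphism of sheaves. -/
theorem stmt_7 (J : GrothendieckTopology C) (hrep : IsReplete (Sheaf J (Type u)))
    (F G : ℕᵒᵖ ⥤ Cᵒᵖ ⥤ Type u) (η : F ⟶ G)
    (hF : ∀ n : ℕ, IsMultiplicative J (F.obj (op n)))
    (hG : ∀ n : ℕ, IsMultiplicative J (G.obj (op n)))
    (hiso : ∀ n : ℕ, IsIso ((presheafToSheaf J (Type u)).map (η.app (op n)))) :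
    Epi ((presheafToSheaf J (Type u)).map (limMap η)) := by
  have hsurj n : Presheaf.IsLocallySurjective J (η.app (op n)) :=
    have := hiso n
    (Presheaf.isLocallySurjective_presheafToSheaf_map_iff J _).1 inferInstance
  have hinj n : Presheaf.IsLocallyInjective J (η.app (op n)) :=
    have := hiso n
    (Presheaf.isLocallyInjective_presheafToSheaf_map_iff J _).1 inferInstance
  have := isLocallySurjective_limMap_of_isReplete hrep η hF hG hsurj hinj
  exact Presheaf.epi_presheafToSheaf_map _
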